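/- arXiv:2410.23038 — 2 statements merged into one kernel-verified Lean document; each statement's English description precedes it below -/
import Mathlib

section
/- Suppose W : ℝ → ℝ is continuous with occupation measure μ_{[0;T]} absolutely continuous with density L ∈ L^∞, and suppose the linear Strichartz estimate ‖e^{-z𝓛}u_0‖_{L^p_z([a;b];X)} ≤ C(b−a)‖u_0‖_{L^2} holds for all intervals [a;b]. Then with I_W(T) = [W_0 − 2‖W‖_{L^∞([0;T])}; W_0 + 2‖W‖_{L^∞([0;T])}], one has ‖e^{-(W_t−W_0)𝓛}u_0‖_{L^p_t([0;T];X)}^p ≤ ‖L‖_{L^∞} · C(|I_W(T)|)^p · ‖u_0‖_{L^2}^p. -/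
/-!
Since `|W t| ≤ ‖W‖_∞` on `[0;T]`, the path `W` stays in the interval
`I_W(T) = [W 0 - 2‖W‖_∞; W 0 + 2‖W‖_∞]`. The occupation time formula turns the time integral of
`‖f ∘ W‖^p` into the space integral of `‖f‖^p` against the occupation density, which is at most
`‖L‖_∞` times the integral over `I_W(T)`, and the latter is controlled by the linear estimate.
-/

open MeasureTheory Set
open scoped ENNReal

theorem lintegral_comp_le_mul_setLIntegral_of_occupation_density {α β : Type*}
    [MeasurableSpace α] [MeasurableSpace β] {μ : Measure α} {ν : Measure β}
    {W : α → β} {L : β → ℝ≥0∞} {K : ℝ≥0∞} (hLK : ∀ z, L z ≤ K)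
    (hocc : ∀ g : β → ℝ≥0∞, Measurable g → ∫⁻ t, g (W t) ∂μ = ∫⁻ z, g z * L z ∂ν)
    {S : Set β} (hS : MeasurableSet S) (hWS : ∀ᵐ t ∂μ, W t ∈ S)
    {g : β → ℝ≥0∞} (hg : Measurable g) :
    ∫⁻ t, g (W t) ∂μ ≤ K * ∫⁻ z in S, g z ∂ν :=
  calc ∫⁻ t, g (W t) ∂μ = ∫⁻ t, S.indicator g (W t) ∂μ :=
        lintegral_congr_ae (hWS.mono fun t ht => (indicator_of_mem ht g).symm)
    _ = ∫⁻ z, S.indicator g z * L z ∂ν := hocc _ (hg.indicator hS)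
    _ ≤ ∫⁻ z, S.indicator g z * K ∂ν := lintegral_mono fun z => mul_le_mul_right (hLK z) _
    _ = K * ∫⁻ z in S, g z ∂ν := by
        rw [lintegral_mul_const _ (hg.indicator hS), lintegral_indicator hS, mul_comm]

theorem mem_Icc_sub_two_mul_add_two_mul_of_abs_le {x y r : ℝ} (hx : |x| ≤ r) (hy : |y| ≤ r) :
    x ∈ Icc (y - 2 * r) (y + 2 * r) := by
  rw [← mem_Icc_iff_abs_le]
  calc |y - x| ≤ |y| + |x| := abs_sub _ _
    _ ≤ 2 * r := by linarith

theorem stmt3_general {X : Type*} [NormedAddCommGroup X]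
    (f : ℝ → X) (W : ℝ → ℝ) (T : ℝ) (hT : 0 < T)
    (p : ℝ)
    (L : ℝ → ℝ≥0∞) (K : ℝ≥0∞) (hLK : ∀ z, L z ≤ K)
    (C : ℝ → ℝ) (M Wnorm : ℝ)
    (hWbd : ∀ t ∈ Icc (0 : ℝ) T, |W t| ≤ Wnorm)
    (hocc : ∀ g : ℝ → ℝ≥0∞, Measurable g →
      ∫⁻ t in Icc (0 : ℝ) T, g (W t) = ∫⁻ z, g z * L z)
    (hmeas : Measurable fun z => ENNReal.ofReal (‖f z‖ ^ p))
    (hStr : ∀ a b : ℝ, a ≤ b →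
      ∫⁻ z in Icc a b, ENNReal.ofReal (‖f z‖ ^ p) ≤
        ENNReal.ofReal ((C (b - a)) ^ p * M ^ p)) :
    ∫⁻ t in Icc (0 : ℝ) T, ENNReal.ofReal (‖f (W t)‖ ^ p) ≤
      K * ENNReal.ofReal ((C (4 * Wnorm)) ^ p * M ^ p) := by
  have hW0 : |W 0| ≤ Wnorm := hWbd 0 ⟨le_rfl, hT.le⟩
  have hrange : ∀ᵐ t ∂volume.restrict (Icc 0 T), W t ∈ Icc (W 0 - 2 * Wnorm) (W 0 + 2 * Wnorm) :=
    (ae_restrict_iff' measurableSet_Icc).2 <| ae_of_all _ fun t ht =>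
      mem_Icc_sub_two_mul_add_two_mul_of_abs_le (hWbd t ht) hW0
  have hlen : W 0 + 2 * Wnorm - (W 0 - 2 * Wnorm) = 4 * Wnorm := by ring
  calc ∫⁻ t in Icc (0 : ℝ) T, ENNReal.ofReal (‖f (W t)‖ ^ p)
      ≤ K * ∫⁻ z in Icc (W 0 - 2 * Wnorm) (W 0 + 2 * Wnorm), ENNReal.ofReal (‖f z‖ ^ p) :=
        lintegral_comp_le_mul_setLIntegral_of_occupation_density hLK hocc measurableSet_Icc
          hrange hmeas
    _ ≤ K * ENNReal.ofReal ((C (4 * Wnorm)) ^ p * M ^ p) := by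
        gcongr
        rw [← hlen]
        exact hStr _ _ (by linarith [abs_nonneg (W 0)])

/-- Transfer of Strichartz estimates to the modulated evolution: if the occupation measure of
`W` on `[0;T]` has density `L` bounded by `K`, and the linear space-time estimate
`‖f‖_{L^p([a;b];X)} ≤ C(b-a) M` holds on every interval, then with
`I_W(T) = [W 0 - 2‖W‖_∞ ; W 0 + 2‖W‖_∞]` (of length `4‖W‖_∞`) one has
`∫_0^T ‖f (W t)‖^p dt ≤ ‖L‖_∞ C(|I_W(T)|)^p M^p`. -/
theorem stmt3 {X : Type*} [NormedAddCommGroup X]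
    (f : ℝ → X) (W : ℝ → ℝ) (T : ℝ) (hT : 0 < T)
    (p : ℝ) (hp : 1 ≤ p)
    (L : ℝ → ℝ≥0∞) (K : ℝ≥0∞) (hLK : ∀ z, L z ≤ K)
    (C : ℝ → ℝ) (hC : Monotone C) (M Wnorm : ℝ) (hWnorm : 0 ≤ Wnorm)
    (hWbd : ∀ t ∈ Icc (0 : ℝ) T, |W t| ≤ Wnorm)
    (hocc : ∀ g : ℝ → ℝ≥0∞, Measurable g →
      ∫⁻ t in Icc (0 : ℝ) T, g (W t) = ∫⁻ z, g z * L z)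
    (hmeas : Measurable fun z => ENNReal.ofReal (‖f z‖ ^ p))
    (hStr : ∀ a b : ℝ, a ≤ b →
      ∫⁻ z in Icc a b, ENNReal.ofReal (‖f z‖ ^ p) ≤
        ENNReal.ofReal ((C (b - a)) ^ p * M ^ p)) :
    ∫⁻ t in Icc (0 : ℝ) T, ENNReal.ofReal (‖f (W t)‖ ^ p) ≤
      K * ENNReal.ofReal ((C (4 * Wnorm)) ^ p * M ^ p) :=
  stmt3_general f W T hT p L K hLK C M Wnorm hWbd hocc hmeas hStr
end

section
/- Strip localization of the resonance: let n_ℓ ∈ ℤ^d with |n_ℓ| ∼ N_1, let M ≥ 1, and suppose n_0 lies in the cube n_ℓ + [−N_2; N_2]^d and in the strip R_α = {n : n·n_ℓ ∈ [α|n_ℓ|M; (α+1)|n_ℓ|M)} with N_2^2 ≤ |α| M^2 and |α| ∼ M^{−1}N_1. Then |n_0|^2 = α^2 M^2 + O(|α| M^2), i.e. there is an absolute constant C with | |n_0|^2 − α^2 M^2 | ≤ C |α| M^2. -/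
open scoped RealInnerProductSpace

/-! The ratio `s = ⟪n₀, nℓ⟫ / ‖nℓ‖` is the coordinate of `n₀` along `nℓ`. The strip pins
`s ∈ [αM, (α + 1)M)`, so `s² = α²M² + O(|α|M²)`, while `‖n₀‖² - s²`, the squared distance from `n₀`
to the line `ℝ nℓ`, lies between `0` and `‖n₀ - nℓ‖² ≤ d N₂² ≤ d |α| M²`. -/

theorem EuclideanSpace.norm_sub_sq_le_of_forall_abs_le {d : ℕ} {x y : EuclideanSpace ℝ (Fin d)}
    {r : ℝ} (h : ∀ i, |x i - y i| ≤ r) : ‖x - y‖ ^ 2 ≤ d * r ^ 2 := by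
  rw [EuclideanSpace.norm_sq_eq]
  calc ∑ i, ‖(x - y) i‖ ^ 2 ≤ ∑ _i : Fin d, r ^ 2 :=
        Finset.sum_le_sum fun i _ => by
          rw [PiLp.sub_apply, Real.norm_eq_abs]
          exact pow_le_pow_left₀ (abs_nonneg _) (h i) 2
    _ = d * r ^ 2 := by simp

section InnerProductSpace

variable {E : Type*} [NormedAddCommGroup E] [InnerProductSpace ℝ E]

theorem sq_inner_div_norm_le_norm_sq (x y : E) : (⟪x, y⟫ / ‖y‖) ^ 2 ≤ ‖x‖ ^ 2 := by
  rw [← sq_abs, abs_div, abs_norm]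
  exact pow_le_pow_left₀ (by positivity)
    (div_le_of_le_mul₀ (norm_nonneg y) (norm_nonneg x) (abs_real_inner_le_norm x y)) 2

theorem norm_sq_sub_sq_inner_div_norm_le_norm_sub_sq (x y : E) :
    ‖x‖ ^ 2 - (⟪x, y⟫ / ‖y‖) ^ 2 ≤ ‖x - y‖ ^ 2 := by
  rcases eq_or_ne y 0 with rfl | hy
  · simp
  have hL : 0 < ‖y‖ ^ 2 := by positivity
  rw [div_pow, sub_le_iff_le_add, ← sub_le_iff_le_add', le_div_iff₀ hL, norm_sub_sq_real]
  -- the gap between the two sides is exactly `(‖y‖² - ⟪x, y⟫)²`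
  nlinarith [sq_nonneg (‖y‖ ^ 2 - ⟪x, y⟫)]

end InnerProductSpace

theorem abs_sq_sub_sq_le_of_mem_Ico {a M s : ℝ} (ha : 1 ≤ |a|) (hM : 0 ≤ M) (hlo : a * M ≤ s)
    (hhi : s < (a + 1) * M) : |s ^ 2 - a ^ 2 * M ^ 2| ≤ 3 * |a| * M ^ 2 := by
  have hdiff : |s - a * M| ≤ M := abs_le.2 ⟨by linarith, by linarith⟩
  have hsum : |s + a * M| ≤ 3 * |a| * M :=
    calc |s + a * M| = |(s - a * M) + 2 * (a * M)| := by congr 1; ring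
      _ ≤ M + 2 * (|a| * M) := by
        grw [abs_add_le, hdiff, abs_mul, abs_mul, abs_of_nonneg hM, abs_two]
      _ ≤ 3 * |a| * M := by nlinarith
  calc |s ^ 2 - a ^ 2 * M ^ 2| = |s - a * M| * |s + a * M| := by
        rw [← abs_mul]; congr 1; ring
    _ ≤ M * (3 * |a| * M) := by gcongr
    _ = 3 * |a| * M ^ 2 := by ring

/-- Strip localization of the resonance: if `n₀` lies in the cube `nℓ + [-N₂;N₂]^d` and in
the strip `{n : n·nℓ ∈ [α|nℓ|M; (α+1)|nℓ|M)}`, with `N₂² ≤ |α| M²` and `M ≥ 1`, then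
`| |n₀|² - α²M² | ≤ C |α| M²`. -/
theorem stmt13 (d : ℕ) : ∃ C > (0 : ℝ),
    ∀ (n₀ nℓ : EuclideanSpace ℝ (Fin d)) (M N₂ : ℝ) (α : ℤ),
      1 ≤ M → 0 ≤ N₂ → nℓ ≠ 0 → α ≠ 0 →
      (∀ i, |n₀ i - nℓ i| ≤ N₂) →
      N₂ ^ 2 ≤ |(α : ℝ)| * M ^ 2 →
      (α : ℝ) * ‖nℓ‖ * M ≤ ⟪n₀, nℓ⟫ →
      ⟪n₀, nℓ⟫ < ((α : ℝ) + 1) * ‖nℓ‖ * M →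
      |‖n₀‖ ^ 2 - (α : ℝ) ^ 2 * M ^ 2| ≤ C * |(α : ℝ)| * M ^ 2 := by
  refine ⟨d + 3, by positivity, fun n₀ nℓ M N₂ α hM _ hnℓ hα hcube hN₂ hlo hhi => ?_⟩
  have hL : 0 < ‖nℓ‖ := norm_pos_iff.mpr hnℓ
  have hα1 : (1 : ℝ) ≤ |(α : ℝ)| := by exact_mod_cast Int.one_le_abs hα
  set s := ⟪n₀, nℓ⟫ / ‖nℓ‖
  have hs : |s ^ 2 - (α : ℝ) ^ 2 * M ^ 2| ≤ 3 * |(α : ℝ)| * M ^ 2 :=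
    abs_sq_sub_sq_le_of_mem_Ico hα1 (by linarith)
      ((le_div_iff₀ hL).2 (by linarith)) ((div_lt_iff₀ hL).2 (by linarith))
  have hperp : |‖n₀‖ ^ 2 - s ^ 2| ≤ d * (|(α : ℝ)| * M ^ 2) := by
    rw [abs_of_nonneg (sub_nonneg.2 (sq_inner_div_norm_le_norm_sq n₀ nℓ))]
    calc ‖n₀‖ ^ 2 - s ^ 2 ≤ ‖n₀ - nℓ‖ ^ 2 := norm_sq_sub_sq_inner_div_norm_le_norm_sub_sq n₀ nℓ
      _ ≤ d * N₂ ^ 2 := EuclideanSpace.norm_sub_sq_le_of_forall_abs_le hcube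
      _ ≤ d * (|(α : ℝ)| * M ^ 2) := by gcongr
  calc |‖n₀‖ ^ 2 - (α : ℝ) ^ 2 * M ^ 2|
      ≤ |‖n₀‖ ^ 2 - s ^ 2| + |s ^ 2 - (α : ℝ) ^ 2 * M ^ 2| := abs_sub_le _ _ _
    _ ≤ (d + 3) * |(α : ℝ)| * M ^ 2 := by linarith
end
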